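/- Let m ≥ 2 be such that L := log₂ m is a positive integer dividing m, let X = m/L, and let V = { v^[1], …, v^[X] } be the family of multi-unit valuations defined by v^[x](s) = 0 if s ≤ m − xL, and v^[x](s) = m·(x − x') + 2^{s − (m − x'L)} where x' is the unique integer in {1,…,x} with m − x'L < s ≤ m − (x'−1)L. Then: (1) for every quantity q ∈ {1,…,m} there exists x ∈ {1,…,X} with v^[x](q) ≥ 2 and v^[x](q) ≥ 2·v^[x](q−1); and (2) consequently, every set K ⊆ {0,…,m} with 0 ∈ K such that v^K(s) > (1/2)·v(s) for all v ∈ V and all s ∈ {0,…,m} must satisfy {1,…,m} ⊆ K. In particular, the domain V admits no sketch of fewer than m quantities achieving an approximation factor better than 1/2. -/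

import Mathlib

/-!
On the interval `(m - xL, m]` the valuation `v^[x]` consists of `x` blocks of `L` quantities; on
its `j`-th block from the right it takes the values `m(x - j) + 2^e`, `e = 1, …, L`. Inside a block
it doubles at each step, and across a block boundary it grows by `2`, because `2^L = m` is exactly
the drop of the `m(x - j)` term; so it is monotone. Each quantity `q` lies in the rightmost block of
`v^[x]` for a suitable `x`, where `v^[x](q - 1) ≤ v^[x](q) / 2`. By monotonicity, a projection onto a
set `K` missing `q` sees at most `v^[x](q - 1)` at `q`, so it cannot beat the factor `1/2` there.
-/

/-- The `x`-th valuation of the no-sketch domain: `v^[x](s) = 0` for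
`s ≤ m − xL`, and otherwise `v^[x](s) = m(x − x') + 2^{s − (m − x'L)}`, where
`x' = ⌊(m−s)/L⌋ + 1` is the unique index with `m − x'L < s ≤ m − (x'−1)L`. -/
noncomputable def vX (m L x s : ℕ) : ℝ :=
  if s ≤ m - x * L then 0
  else
    (m : ℝ) * ((x : ℝ) - (((m - s) / L + 1 : ℕ) : ℝ)) +
      (2 : ℝ) ^ (s - (m - ((m - s) / L + 1) * L))

/-- Projection of a multi-unit valuation `v` onto a set of quantities `K`
(containing `0`): `v^K(s) = max { v(x) : x ∈ K, x ≤ s }`. -/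
noncomputable def proj (K : Finset ℕ) (v : ℕ → ℝ) (s : ℕ) : ℝ :=
  sSup (v '' {x | x ∈ K ∧ x ≤ s})

section Valuation

variable {m L x s : ℕ}

lemma vX_of_le (h : s ≤ m - x * L) : vX m L x s = 0 := if_pos h

lemma vX_block {j e : ℕ} (hj : j < x) (hxL : x * L ≤ m) (he : 1 ≤ e) (heL : e ≤ L) :
    vX m L x (m - (j + 1) * L + e) = m * ((x : ℝ) - (j + 1)) + 2 ^ e := by
  have hjx : (j + 1) * L ≤ x * L := Nat.mul_le_mul_right L hj
  have hsplit : (j + 1) * L = j * L + L := Nat.succ_mul j L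
  have hdiv : (m - (m - (j + 1) * L + e)) / L = j := by
    rw [show m - (m - (j + 1) * L + e) = (L - e) + L * j by rw [hsplit] at hjx ⊢; lia,
      Nat.add_mul_div_left _ _ (by lia), Nat.div_eq_of_lt (by lia), zero_add]
  rw [vX, if_neg (by lia), hdiv, Nat.add_sub_cancel_left]
  push_cast
  ring

lemma exists_block (hL : 0 < L) (hxL : x * L ≤ m) (hs : m - x * L < s) (hsm : s ≤ m) :
    ∃ j < x, ∃ e, 1 ≤ e ∧ e ≤ L ∧ s = m - (j + 1) * L + e := by
  have hdecomp := Nat.div_add_mod (m - s) L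
  have hmod := Nat.mod_lt (m - s) hL
  have hj : (m - s) / L < x := (Nat.div_lt_iff_lt_mul hL).2 (by lia)
  have hjx : ((m - s) / L + 1) * L ≤ x * L := Nat.mul_le_mul_right L hj
  refine ⟨(m - s) / L, hj, L - (m - s) % L, by lia, by lia, ?_⟩
  rw [Nat.succ_mul] at hjx ⊢
  rw [Nat.mul_comm] at hdecomp
  lia

lemma vX_le_succ (hL : 0 < L) (hxL : x * L ≤ m) (hpow : 2 ^ L ≤ m) (hs : s < m) :
    vX m L x s ≤ vX m L x (s + 1) := by
  by_cases hzero : s + 1 ≤ m - x * L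
  · rw [vX_of_le hzero, vX_of_le (by lia)]
  obtain ⟨j, hj, e, he1, heL, hse⟩ := exists_block (s := s + 1) hL hxL (by lia) hs
  have hjx : (j : ℝ) + 1 ≤ x := by exact_mod_cast hj
  have hm0 : (0 : ℝ) ≤ m * ((x : ℝ) - (j + 1)) := mul_nonneg m.cast_nonneg (by linarith)
  rw [hse, vX_block hj hxL he1 heL]
  rcases Nat.lt_or_ge 1 e with he2 | he2
  · rw [show s = m - (j + 1) * L + (e - 1) by lia, vX_block hj hxL (by lia) (by lia)]
    linarith [pow_le_pow_right₀ (one_le_two (α := ℝ)) (Nat.sub_le e 1)]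
  rcases Nat.lt_or_ge (j + 1) x with hjx' | hjx'
  · -- across a block boundary: `m(x - j - 2) + 2^L ≤ m(x - j - 1)`
    have hsplit : (j + 1 + 1) * L = (j + 1) * L + L := Nat.succ_mul (j + 1) L
    have hjL : (j + 1 + 1) * L ≤ x * L := Nat.mul_le_mul_right L hjx'
    rw [show s = m - (j + 1 + 1) * L + L by lia, vX_block hjx' hxL hL le_rfl]
    have hpow' : (2 : ℝ) ^ L ≤ m := by exact_mod_cast hpow
    push_cast
    nlinarith [pow_pos (two_pos (α := ℝ)) e]
  · rw [vX_of_le (by rw [show x = j + 1 by lia]; lia)]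
    positivity

lemma vX_monotoneOn (hL : 0 < L) (hxL : x * L ≤ m) (hpow : 2 ^ L ≤ m) :
    MonotoneOn (vX m L x) (Set.Iic m) :=
  monotoneOn_of_le_succ Set.ordConnected_Iic fun a _ _ ha => by
    rw [Order.succ_eq_add_one] at ha ⊢
    exact vX_le_succ hL hxL hpow ha

lemma exists_vX_doubling (hL : 0 < L) (hdvd : L ∣ m) {q : ℕ} (hq1 : 1 ≤ q) (hqm : q ≤ m) :
    ∃ x, 1 ≤ x ∧ x ≤ m / L ∧ 2 ≤ vX m L x q ∧ 2 * vX m L x (q - 1) ≤ vX m L x q := by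
  obtain ⟨j, hj, e, he1, heL, hqe⟩ :=
    exists_block (x := m / L) hL (Nat.div_mul_le_self m L)
      (by rw [Nat.div_mul_cancel hdvd]; lia) hqm
  have hjL : (j + 1) * L ≤ m := (Nat.le_div_iff_mul_le hL).1 hj
  have hvx (k : ℕ) (hk1 : 1 ≤ k) (hkL : k ≤ L) :
      vX m L (j + 1) (m - (j + 1) * L + k) = 2 ^ k := by
    rw [vX_block (Nat.lt_succ_self j) hjL hk1 hkL]
    push_cast
    ring
  refine ⟨j + 1, by lia, hj, ?_, ?_⟩
  · rw [hqe, hvx e he1 heL]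
    simpa using pow_le_pow_right₀ one_le_two he1
  rcases Nat.lt_or_ge 1 e with he2 | he2
  · rw [hqe, show m - (j + 1) * L + e - 1 = m - (j + 1) * L + (e - 1) by lia,
      hvx e he1 heL, hvx (e - 1) (by lia) (by lia), ← pow_succ', Nat.sub_add_cancel he1]
  · rw [vX_of_le (by lia), mul_zero, hqe, hvx e he1 heL]
    positivity

end Valuation

lemma proj_le_of_notMem {K : Finset ℕ} {v : ℕ → ℝ} {q : ℕ} (hv : MonotoneOn v (Set.Iio q))
    (h0 : 0 ∈ K) (hq : q ∉ K) : proj K v q ≤ v (q - 1) := by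
  refine csSup_le ⟨v 0, 0, ⟨h0, Nat.zero_le q⟩, rfl⟩ ?_
  rintro _ ⟨y, ⟨hyK, hyq⟩, rfl⟩
  have hy : y < q := lt_of_le_of_ne hyq fun h => hq (h ▸ hyK)
  exact hv hy (Nat.sub_one_lt_of_lt hy) (Nat.le_sub_one_of_lt hy)

theorem no_sketch_domain_needs_all_quantities_general
    (m L : ℕ) (hL : 0 < L) (hpow : 2 ^ L = m) (hdvd : L ∣ m) :
    (∀ q : ℕ, 1 ≤ q → q ≤ m → ∃ x : ℕ, 1 ≤ x ∧ x ≤ m / L ∧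
      2 ≤ vX m L x q ∧ 2 * vX m L x (q - 1) ≤ vX m L x q) ∧
    (∀ K : Finset ℕ, (∀ y ∈ K, y ≤ m) → 0 ∈ K →
      (∀ x : ℕ, 1 ≤ x → x ≤ m / L → ∀ s : ℕ, s ≤ m →
        (1 / 2 : ℝ) * vX m L x s < proj K (vX m L x) s) →
      ∀ q : ℕ, 1 ≤ q → q ≤ m → q ∈ K) := by
  refine ⟨fun q hq1 hqm => exists_vX_doubling hL hdvd hq1 hqm, ?_⟩
  intro K _ hK0 hsketch q hq1 hqm
  obtain ⟨x, hx1, hxm, -, hdouble⟩ := exists_vX_doubling hL hdvd hq1 hqm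
  by_contra hqK
  have hmono : MonotoneOn (vX m L x) (Set.Iio q) :=
    (vX_monotoneOn hL ((Nat.le_div_iff_mul_le hL).1 hxm) hpow.le).mono
      fun _ hy => hy.le.trans hqm
  have hproj := proj_le_of_notMem hmono hK0 hqK
  linarith [hsketch x hx1 hxm q hqm]

/-- (1) for every quantity `q ∈ {1,…,m}` there is an `x` with
`v^[x](q) ≥ 2` and `v^[x](q) ≥ 2·v^[x](q−1)`; (2) consequently, every set of
quantities `K ∋ 0` whose projections satisfy `v^K(s) > (1/2)·v(s)` for all
valuations of the domain and all quantities must contain all of `{1,…,m}`;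
i.e., the domain admits no sketch with fewer than `m` quantities achieving an
approximation factor better than `1/2`. -/
theorem no_sketch_domain_needs_all_quantities
    (m L : ℕ) (hm : 2 ≤ m) (hL : 0 < L) (hpow : 2 ^ L = m) (hdvd : L ∣ m) :
    (∀ q : ℕ, 1 ≤ q → q ≤ m → ∃ x : ℕ, 1 ≤ x ∧ x ≤ m / L ∧
      2 ≤ vX m L x q ∧ 2 * vX m L x (q - 1) ≤ vX m L x q) ∧
    (∀ K : Finset ℕ, (∀ y ∈ K, y ≤ m) → 0 ∈ K →
      (∀ x : ℕ, 1 ≤ x → x ≤ m / L → ∀ s : ℕ, s ≤ m →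
        (1 / 2 : ℝ) * vX m L x s < proj K (vX m L x) s) →
      ∀ q : ℕ, 1 ≤ q → q ≤ m → q ∈ K) :=
  no_sketch_domain_needs_all_quantities_general m L hL hpow hdvd
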